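/- arXiv:1407.1616 — 2 statements merged into one kernel-verified Lean document; each statement's English description precedes it below -/
import Mathlib

section
/- Let A and B be rings with J^s ⊆ I ⊆ J² in A, A/J semisimple, and suppose φ : B ≅ A/I is a ring isomorphism. Then B/rad(B) ≅ A/J, and rad(B)/rad(B)² ≅ J/(J² + I) ≅ (J/I)/((J/I)²) as B/rad(B)-bimodules (via φ). -/
/-!
In `Q = A ⧸ I` the image `J' = J ⧸ I` is the kernel of the projection `Q → A ⧸ J` onto a
semisimple ring, and it is nil since `J ^ s ⊆ I`. A nil two-sided ideal lies in the Jacobson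
radical, and the radical dies in a semisimple quotient, so `rad Q = J'`. Transported along `φ`,
`rad B` is the kernel of `B → A ⧸ J`, whence `B ⧸ rad B ≅ A ⧸ J`. Both `rad B ⧸ (rad B)²` and
`J ⧸ (J² + I)` map isomorphically onto `J' ⧸ J'²` (through `φ` and through `A → Q`, whose kernel
is `I`); as these maps are multiplicative, the composite isomorphism intertwines the action of
`b ∈ B` with that of any `a ∈ A` such that `φ b = a + I`.
-/

namespace Ideal

theorem mem_jacobson_bot_of_isNilpotent_mul {R : Type*} [Ring R] {x : R}
    (h : ∀ y, IsNilpotent (y * x)) : x ∈ (⊥ : Ideal R).jacobson := by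
  refine mem_jacobson_iff.mpr fun y => ?_
  obtain ⟨u, hu⟩ := (h y).isUnit_add_one
  refine ⟨↑u⁻¹, ?_⟩
  rw [mem_bot, mul_assoc, ← mul_add_one, ← hu, u.inv_mul, sub_self]

theorem map_mem_jacobson_bot_of_surjective {R S : Type*} [Ring R] [Ring S] {f : R →+* S}
    (hf : Function.Surjective f) {x : R} (hx : x ∈ (⊥ : Ideal R).jacobson) :
    f x ∈ (⊥ : Ideal S).jacobson := by
  have : RingHomSurjective f := ⟨hf⟩
  rw [jacobson_bot] at hx ⊢
  exact Ring.le_comap_jacobson f hx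

theorem mem_jacobson_bot_iff_of_isSemisimpleRing {R S : Type*} [Ring R] [Ring S]
    [IsSemisimpleRing S] {f : R →+* S} (hf : Function.Surjective f)
    (hnil : ∀ x, f x = 0 → IsNilpotent x) {x : R} :
    x ∈ (⊥ : Ideal R).jacobson ↔ f x = 0 := by
  refine ⟨fun hx => ?_, fun hx => ?_⟩
  · simpa [jacobson_bot, IsSemisimpleRing.jacobson_eq_bot] using
      map_mem_jacobson_bot_of_surjective hf hx
  · exact mem_jacobson_bot_of_isNilpotent_mul fun y => hnil _ (by rw [map_mul, hx, mul_zero])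

end Ideal

namespace Submodule

section Subquotient

variable {R M M' N : Type*} [Ring R] [AddCommGroup M] [Module R M] [AddCommGroup M']
  [Module R M'] [AddCommGroup N] [Module R N] (f : M →ₗ[R] N) {U V : Submodule R M}
  {U' V' : Submodule R N}

noncomputable def subquotientEquivOfMap (hU : U.map f = U') (hV : ∀ u ∈ U, f u ∈ V' ↔ u ∈ V) :
    (U ⧸ V.comap U.subtype) ≃ₗ[R] (U' ⧸ V'.comap U'.subtype) :=
  let g := (V'.comap U'.subtype).mkQ ∘ₗ f.restrict fun u hu => hU ▸ mem_map_of_mem hu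
  have hker : LinearMap.ker g = V.comap U.subtype := by
    ext u
    simpa [g] using hV u u.2
  have hg : Function.Surjective g := by
    intro t
    obtain ⟨v, rfl⟩ := Quotient.mk_surjective _ t
    obtain ⟨u, hu, huv⟩ := (hU ▸ v.2 : (v : N) ∈ U.map f)
    exact ⟨⟨u, hu⟩, congrArg Quotient.mk (Subtype.ext huv)⟩
  (quotEquivOfEq _ _ hker.symm).trans (g.quotKerEquivOfSurjective hg)

theorem subquotientEquivOfMap_mk (hU : U.map f = U') (hV : ∀ u ∈ U, f u ∈ V' ↔ u ∈ V) (u : U) :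
    subquotientEquivOfMap f hU hV (Quotient.mk u) =
      Quotient.mk ⟨f u, hU ▸ mem_map_of_mem u.2⟩ :=
  rfl

variable {W X : Submodule R M'}

theorem subquotientEquivOfMap_trans_symm_mk_eq_mk_iff (g : M' →ₗ[R] N)
    (hU : U.map f = U') (hV : ∀ u ∈ U, f u ∈ V' ↔ u ∈ V)
    (hW : W.map g = U') (hX : ∀ w ∈ W, g w ∈ V' ↔ w ∈ X) (u : U) (w : W) :
    ((subquotientEquivOfMap f hU hV).trans (subquotientEquivOfMap g hW hX).symm
        (Quotient.mk u) = Quotient.mk w) ↔ f u - g w ∈ V' := by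
  rw [LinearEquiv.trans_apply, LinearEquiv.symm_apply_eq, subquotientEquivOfMap_mk,
    subquotientEquivOfMap_mk, Quotient.eq]
  rfl

theorem mem_map_iff_mem_sup_ker (P : Submodule R M) (x : M) :
    f x ∈ P.map f ↔ x ∈ P ⊔ LinearMap.ker f := by
  rw [← mem_comap, comap_map_eq]

end Subquotient

section Ring

variable {R S : Type*} [Ring R] [Ring S]

theorem map_toIntLinearMap_pow (f : R →+* S) (P : Submodule ℤ R) (n : ℕ) :
    (P ^ n).map f.toAddMonoidHom.toIntLinearMap = P.map f.toAddMonoidHom.toIntLinearMap ^ n :=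
  Submodule.map_pow P f.toIntAlgHom n

theorem map_mem_map_sq_iff (f : R →+* S) (P : Submodule ℤ R) (x : R) :
    f.toAddMonoidHom.toIntLinearMap x ∈ P.map f.toAddMonoidHom.toIntLinearMap ^ 2 ↔
      x ∈ P ^ 2 ⊔ LinearMap.ker f.toAddMonoidHom.toIntLinearMap := by
  rw [← map_toIntLinearMap_pow, ← mem_map_iff_mem_sup_ker]

theorem map_ringEquiv_eq_of_mem_iff (φ : R ≃+* S) {P : Submodule ℤ R} {P' : Submodule ℤ S}
    (h : ∀ x, x ∈ P ↔ φ x ∈ P') : P.map φ.toRingHom.toAddMonoidHom.toIntLinearMap = P' := by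
  ext q
  obtain ⟨x, rfl⟩ := φ.surjective q
  exact (mem_map_iff_mem_sup_ker _ P x).trans
    (by rw [LinearMap.ker_eq_bot.mpr φ.injective, sup_bot_eq, h])

theorem mul_mem_sq_left {P : Submodule ℤ R} {K : TwoSidedIdeal R} (hP : ∀ x, x ∈ P ↔ x ∈ K)
    (r : R) {p : R} (hp : p ∈ P ^ 2) : r * p ∈ P ^ 2 := by
  have hle : (⊤ : Submodule ℤ R) * (P * P) ≤ P * P := by
    rw [← mul_assoc]
    exact mul_le_mul' (mul_le.mpr fun r _ p hp => (hP _).2 (K.mul_mem_left r p ((hP p).1 hp)))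
      le_rfl
  rw [sq] at hp ⊢
  exact hle (mul_mem_mul mem_top hp)

theorem mul_mem_sq_right {P : Submodule ℤ R} {K : TwoSidedIdeal R} (hP : ∀ x, x ∈ P ↔ x ∈ K)
    (r : R) {p : R} (hp : p ∈ P ^ 2) : p * r ∈ P ^ 2 := by
  have hle : P * P * ⊤ ≤ P * P := by
    rw [mul_assoc]
    exact mul_le_mul' le_rfl
      (mul_le.mpr fun p hp r _ => (hP _).2 (K.mul_mem_right p r ((hP p).1 hp)))
  rw [sq] at hp ⊢
  exact hle (mul_mem_mul hp mem_top)

end Ring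

end Submodule

theorem RingCon.map_surjective {M : Type*} [NonAssocSemiring M] (c d : RingCon M) (h : c ≤ d) :
    Function.Surjective (c.map d h) :=
  lift_surjective_of_surjective _ (mk'_surjective d)

namespace TwoSidedIdeal

variable {A : Type*} [Ring A] {I J : TwoSidedIdeal A} {sI sJ : Submodule ℤ A}

theorem ringCon_mk'_eq_zero_iff (I : TwoSidedIdeal A) (a : A) : I.ringCon.mk' a = 0 ↔ a ∈ I :=
  I.ringCon.eq

theorem ker_ringCon_mk'_toIntLinearMap (hsI : ∀ x, x ∈ sI ↔ x ∈ I) :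
    LinearMap.ker (I.ringCon.mk').toAddMonoidHom.toIntLinearMap = sI := by
  ext a
  exact (I.ringCon_mk'_eq_zero_iff a).trans (hsI a).symm

theorem ringCon_le_of_le_sq (hsI : ∀ x, x ∈ sI ↔ x ∈ I) (hsJ : ∀ x, x ∈ sJ ↔ x ∈ J)
    (h : sI ≤ sJ ^ 2) : I.ringCon ≤ J.ringCon := by
  refine ringCon_le_iff.mp fun a ha => (hsJ a).1 ?_
  refine (sq sJ ▸ Submodule.mul_le.mpr fun b _ c hc => ?_) (h ((hsI a).2 ha))
  exact (hsJ _).2 (J.mul_mem_left b c ((hsJ c).1 hc))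

theorem ringCon_map_eq_zero_iff (hsJ : ∀ x, x ∈ sJ ↔ x ∈ J) (h : I.ringCon ≤ J.ringCon)
    (q : I.ringCon.Quotient) :
    RingCon.map I.ringCon J.ringCon h q = 0 ↔
      q ∈ sJ.map (I.ringCon.mk').toAddMonoidHom.toIntLinearMap := by
  obtain ⟨a, rfl⟩ := RingCon.mk'_surjective _ q
  refine ⟨fun ha => Submodule.mem_map_of_mem ((hsJ a).2 ((J.ringCon_mk'_eq_zero_iff a).1 ha)), ?_⟩
  rintro ⟨b, hb, hba⟩
  rw [← hba]
  exact (J.ringCon_mk'_eq_zero_iff b).2 ((hsJ b).1 hb)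

theorem isNilpotent_of_mem_map_ringCon_mk' (hsI : ∀ x, x ∈ sI ↔ x ∈ I) {s : ℕ}
    (hJsI : sJ ^ s ≤ sI) {q : I.ringCon.Quotient}
    (hq : q ∈ sJ.map (I.ringCon.mk').toAddMonoidHom.toIntLinearMap) : IsNilpotent q := by
  have hqs : q ^ s ∈ (sJ ^ s).map (I.ringCon.mk').toAddMonoidHom.toIntLinearMap :=
    Submodule.map_toIntLinearMap_pow I.ringCon.mk' sJ s ▸ Submodule.pow_mem_pow _ hq s
  obtain ⟨a, ha, hqa⟩ := hqs
  exact ⟨s, hqa ▸ (I.ringCon_mk'_eq_zero_iff a).2 ((hsI a).1 (hJsI ha))⟩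

theorem mem_jacobson_bot_iff_ringCon_map_eq_zero {B : Type*} [Ring B]
    [IsSemisimpleRing J.ringCon.Quotient] (hsI : ∀ x, x ∈ sI ↔ x ∈ I)
    (hsJ : ∀ x, x ∈ sJ ↔ x ∈ J) {s : ℕ} (hJsI : sJ ^ s ≤ sI) (h : I.ringCon ≤ J.ringCon)
    (φ : B ≃+* I.ringCon.Quotient) (x : B) :
    x ∈ (⊥ : Ideal B).jacobson ↔ RingCon.map I.ringCon J.ringCon h (φ x) = 0 :=
  Ideal.mem_jacobson_bot_iff_of_isSemisimpleRing
    (f := (RingCon.map I.ringCon J.ringCon h).comp φ.toRingHom)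
    ((RingCon.map_surjective _ _ h).comp φ.surjective) fun y hy => by
      simpa using (isNilpotent_of_mem_map_ringCon_mk' hsI hJsI
        ((ringCon_map_eq_zero_iff hsJ h _).1 hy)).map φ.symm

end TwoSidedIdeal

theorem stmt10_general (A : Type*) [Ring A] (I J : TwoSidedIdeal A)
    (sI sJ : Submodule ℤ A)
    (hsI : ∀ x : A, x ∈ sI ↔ x ∈ I) (hsJ : ∀ x : A, x ∈ sJ ↔ x ∈ J)
    (s : ℕ) (hJsI : sJ ^ s ≤ sI) (hIJ2 : sI ≤ sJ ^ 2)
    (hss : IsSemisimpleRing J.ringCon.Quotient)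
    (B : Type*) [Ring B] (φ : B ≃+* I.ringCon.Quotient) :
    -- `B / rad B ≅ A / J`
    (∃ K : TwoSidedIdeal B, (∀ x : B, x ∈ K ↔ x ∈ (⊥ : Ideal B).jacobson) ∧
      Nonempty (K.ringCon.Quotient ≃+* J.ringCon.Quotient)) ∧
    -- `rad(B)/rad(B)² ≅ J/(J² + I)` as bimodules via `φ`
    (∃ e : (((⊥ : Ideal B).jacobson.restrictScalars ℤ) ⧸
            Submodule.comap ((⊥ : Ideal B).jacobson.restrictScalars ℤ).subtype
              (((⊥ : Ideal B).jacobson.restrictScalars ℤ) ^ 2)) ≃ₗ[ℤ]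
          (sJ ⧸ Submodule.comap sJ.subtype (sJ ^ 2 ⊔ sI)),
      (∀ (b : B) (a : A), φ b = RingCon.mk' I.ringCon a →
        ∀ (x : ((⊥ : Ideal B).jacobson.restrictScalars ℤ))
          (hbx : b * (x : B) ∈ (⊥ : Ideal B).jacobson.restrictScalars ℤ)
          (y : sJ) (hay : a * (y : A) ∈ sJ),
          e (Submodule.Quotient.mk x) = Submodule.Quotient.mk y →
          e (Submodule.Quotient.mk ⟨b * (x : B), hbx⟩)
            = Submodule.Quotient.mk ⟨a * (y : A), hay⟩) ∧
      (∀ (b : B) (a : A), φ b = RingCon.mk' I.ringCon a →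
        ∀ (x : ((⊥ : Ideal B).jacobson.restrictScalars ℤ))
          (hxb : (x : B) * b ∈ (⊥ : Ideal B).jacobson.restrictScalars ℤ)
          (y : sJ) (hya : (y : A) * a ∈ sJ),
          e (Submodule.Quotient.mk x) = Submodule.Quotient.mk y →
          e (Submodule.Quotient.mk ⟨(x : B) * b, hxb⟩)
            = Submodule.Quotient.mk ⟨(y : A) * a, hya⟩)) ∧
    -- `J/(J² + I) ≅ (J/I)/((J/I)²)`
    Nonempty ((sJ ⧸ Submodule.comap sJ.subtype (sJ ^ 2 ⊔ sI)) ≃ₗ[ℤ]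
      ((Submodule.map (RingCon.mk' I.ringCon).toAddMonoidHom.toIntLinearMap sJ) ⧸
        Submodule.comap
          (Submodule.map (RingCon.mk' I.ringCon).toAddMonoidHom.toIntLinearMap sJ).subtype
          ((Submodule.map (RingCon.mk' I.ringCon).toAddMonoidHom.toIntLinearMap sJ) ^ 2))) := by
  have hIJ := TwoSidedIdeal.ringCon_le_of_le_sq hsI hsJ hIJ2
  set π := I.ringCon.mk'
  set ρ := RingCon.map I.ringCon J.ringCon hIJ
  set sJ' := sJ.map π.toAddMonoidHom.toIntLinearMap
  set RB := (⊥ : Ideal B).jacobson.restrictScalars ℤ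
  set φₗ := φ.toRingHom.toAddMonoidHom.toIntLinearMap
  have hρ : ∀ q, ρ q = 0 ↔ q ∈ sJ' := TwoSidedIdeal.ringCon_map_eq_zero_iff hsJ hIJ
  have hrad : ∀ x : B, x ∈ (⊥ : Ideal B).jacobson ↔ ρ (φ x) = 0 :=
    TwoSidedIdeal.mem_jacobson_bot_iff_ringCon_map_eq_zero hsI hsJ hJsI hIJ φ
  have hK : ∀ q, q ∈ sJ' ↔ q ∈ TwoSidedIdeal.ker ρ := fun q =>
    (hρ q).symm.trans (TwoSidedIdeal.mem_ker ρ).symm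
  have hRB : RB.map φₗ = sJ' := Submodule.map_ringEquiv_eq_of_mem_iff φ fun x =>
    (hrad x).trans (hρ _)
  have hV₂ : ∀ x ∈ RB, φₗ x ∈ sJ' ^ 2 ↔ x ∈ RB ^ 2 := fun x _ => by
    rw [← hRB, Submodule.map_mem_map_sq_iff, LinearMap.ker_eq_bot.mpr φ.injective, sup_bot_eq]
  have hV₃ : ∀ a ∈ sJ, π.toAddMonoidHom.toIntLinearMap a ∈ sJ' ^ 2 ↔ a ∈ sJ ^ 2 ⊔ sI :=
    fun a _ => by
      rw [Submodule.map_mem_map_sq_iff, TwoSidedIdeal.ker_ringCon_mk'_toIntLinearMap hsI]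
  refine ⟨⟨TwoSidedIdeal.ker (ρ.comp φ.toRingHom),
      fun x => (TwoSidedIdeal.mem_ker _).trans (hrad x).symm,
      ⟨RingCon.quotientKerEquivOfSurjective _
        ((RingCon.map_surjective _ _ hIJ).comp φ.surjective)⟩⟩,
    ⟨(Submodule.subquotientEquivOfMap φₗ hRB hV₂).trans
      (Submodule.subquotientEquivOfMap _ rfl hV₃).symm,
    fun b a hba x _ y _ hxy => ?_, fun b a hba x _ y _ hxy => ?_⟩,
    ⟨Submodule.subquotientEquivOfMap _ rfl hV₃⟩⟩
  · rw [Submodule.subquotientEquivOfMap_trans_symm_mk_eq_mk_iff] at hxy ⊢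
    simpa [φₗ, hba, mul_sub] using Submodule.mul_mem_sq_left hK (π a) hxy
  · rw [Submodule.subquotientEquivOfMap_trans_symm_mk_eq_mk_iff] at hxy ⊢
    simpa [φₗ, hba, sub_mul] using Submodule.mul_mem_sq_right hK (π a) hxy

/-- Let `A` and `B` be rings with two-sided ideals `J^s ⊆ I ⊆ J²` in `A`,
`A/J` semisimple, and suppose `φ : B ≅ A/I` is a ring isomorphism.  Then
`B/rad(B) ≅ A/J`, and `rad(B)/rad(B)² ≅ J/(J² + I) ≅ (J/I)/((J/I)²)` as
`B/rad(B)`-bimodules (via `φ`): there is an additive (`ℤ`-linear) isomorphism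
compatible with the left and right multiplications, where `b ∈ B` acts on `J/(J²+I)`
through any representative `a ∈ A` of `φ b`. -/
theorem stmt10 (A : Type*) [Ring A] (I J : TwoSidedIdeal A)
    (sI sJ : Submodule ℤ A)
    (hsI : ∀ x : A, x ∈ sI ↔ x ∈ I) (hsJ : ∀ x : A, x ∈ sJ ↔ x ∈ J)
    (s : ℕ) (hs : 2 ≤ s) (hJsI : sJ ^ s ≤ sI) (hIJ2 : sI ≤ sJ ^ 2)
    (hss : IsSemisimpleRing J.ringCon.Quotient)
    (B : Type*) [Ring B] (φ : B ≃+* I.ringCon.Quotient) :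
    -- `B / rad B ≅ A / J`
    (∃ K : TwoSidedIdeal B, (∀ x : B, x ∈ K ↔ x ∈ (⊥ : Ideal B).jacobson) ∧
      Nonempty (K.ringCon.Quotient ≃+* J.ringCon.Quotient)) ∧
    -- `rad(B)/rad(B)² ≅ J/(J² + I)` as bimodules via `φ`
    (∃ e : (((⊥ : Ideal B).jacobson.restrictScalars ℤ) ⧸
            Submodule.comap ((⊥ : Ideal B).jacobson.restrictScalars ℤ).subtype
              (((⊥ : Ideal B).jacobson.restrictScalars ℤ) ^ 2)) ≃ₗ[ℤ]
          (sJ ⧸ Submodule.comap sJ.subtype (sJ ^ 2 ⊔ sI)),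
      (∀ (b : B) (a : A), φ b = RingCon.mk' I.ringCon a →
        ∀ (x : ((⊥ : Ideal B).jacobson.restrictScalars ℤ))
          (hbx : b * (x : B) ∈ (⊥ : Ideal B).jacobson.restrictScalars ℤ)
          (y : sJ) (hay : a * (y : A) ∈ sJ),
          e (Submodule.Quotient.mk x) = Submodule.Quotient.mk y →
          e (Submodule.Quotient.mk ⟨b * (x : B), hbx⟩)
            = Submodule.Quotient.mk ⟨a * (y : A), hay⟩) ∧
      (∀ (b : B) (a : A), φ b = RingCon.mk' I.ringCon a →
        ∀ (x : ((⊥ : Ideal B).jacobson.restrictScalars ℤ))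
          (hxb : (x : B) * b ∈ (⊥ : Ideal B).jacobson.restrictScalars ℤ)
          (y : sJ) (hya : (y : A) * a ∈ sJ),
          e (Submodule.Quotient.mk x) = Submodule.Quotient.mk y →
          e (Submodule.Quotient.mk ⟨(x : B) * b, hxb⟩)
            = Submodule.Quotient.mk ⟨(y : A) * a, hya⟩)) ∧
    -- `J/(J² + I) ≅ (J/I)/((J/I)²)`
    Nonempty ((sJ ⧸ Submodule.comap sJ.subtype (sJ ^ 2 ⊔ sI)) ≃ₗ[ℤ]
      ((Submodule.map (RingCon.mk' I.ringCon).toAddMonoidHom.toIntLinearMap sJ) ⧸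
        Submodule.comap
          (Submodule.map (RingCon.mk' I.ringCon).toAddMonoidHom.toIntLinearMap sJ).subtype
          ((Submodule.map (RingCon.mk' I.ringCon).toAddMonoidHom.toIntLinearMap sJ) ^ 2))) :=
  stmt10_general A I J sI sJ hsI hsJ s hJsI hIJ2 hss B φ
end

section
/- Let Λ be a finite-dimensional k-algebra, G a finite group acting on Λ by k-algebra automorphisms with |G| invertible in k, and ΛG the skew group algebra. If r = rad(Λ), then rΛG = rad(ΛG) and (ΛG)/(rad(ΛG)) ≅ (Λ/r)G as k-algebras. -/
/-!
Reducing coefficients modulo `r` gives a surjective ring map `ΛG → (Λ/r)G` whose kernel `rΛG`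
consists of the elements with all coefficients in `r`. Since `r` is nilpotent and `G`-stable,
the coefficients of a power `x ^ n` of such an element lie in `r ^ n`, so the kernel is a nil
left ideal and hence lies in the radical. Conversely `(Λ/r)G` is semisimple by Maschke's
averaging trick: if `p` is a `Λ/r`-linear projection onto a left ideal, then
`x ↦ |G|⁻¹ ∑ σ, u σ⁻¹ * p (u σ * x)` is a `(Λ/r)G`-linear one. So the radical of `ΛG` maps to zero.
-/

open Finset

theorem mem_jacobson_of_forall_isNilpotent_mul {R : Type*} [Ring R] {x : R}
    (hx : ∀ y, IsNilpotent (y * x)) : x ∈ Ring.jacobson R := by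
  rw [← Ideal.jacobson_bot, Ideal.mem_jacobson_iff]
  intro y
  obtain ⟨v, hv⟩ := (hx y).isUnit_one_add
  refine ⟨↑v⁻¹, ?_⟩
  rw [Ideal.mem_bot, mul_assoc, sub_eq_zero, ← mul_add_one, add_comm, ← hv, v.inv_mul]

theorem smul_mem_jacobson {G R : Type*} [Group G] [Ring R] [MulSemiringAction G R] (σ : G)
    {a : R} (ha : a ∈ Ring.jacobson R) : σ • a ∈ Ring.jacobson R :=
  Ring.le_comap_jacobson (MulSemiringAction.toRingEquiv G R σ : R →+* R) ha

theorem isSemisimpleRing_of_surjective_of_jacobson_le_ker {R R' : Type*} [Ring R] [Ring R']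
    [IsArtinianRing R] (f : R →+* R') (hf : Function.Surjective f)
    (hker : ∀ x ∈ Ring.jacobson R, f x = 0) : IsSemisimpleRing R' :=
  (Ideal.Quotient.lift _ f hker).isSemisimpleRing_of_surjective
    (Ideal.Quotient.lift_surjective_of_surjective _ hker hf)

theorem exists_projection_of_isSemisimpleRing {R S : Type*} [Ring R] [Ring S] [IsSemisimpleRing R]
    (ι : R →+* S) (N : Submodule S S) :
    ∃ p : S →+ S, (∀ x, p x ∈ N) ∧ (∀ x ∈ N, p x = x) ∧ ∀ a x, p (ι a * x) = ι a * p x := by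
  let _ : Module R S := Module.compHom S ι
  have : IsScalarTower R S S := ⟨fun a x y => mul_assoc (ι a) x y⟩
  obtain ⟨C, hC⟩ := exists_isCompl (N.restrictScalars R)
  let p := (N.restrictScalars R).subtype ∘ₗ (N.restrictScalars R).projectionOnto C hC
  exact ⟨p.toAddMonoidHom, fun x => ((N.restrictScalars R).projectionOnto C hC x).2,
    fun x hx => congrArg Subtype.val (Submodule.projectionOnto_apply_left hC ⟨x, hx⟩),
    fun a x => p.map_smul a x⟩

structure IsSkewGroupAlgebra {Λ G S : Type*} [Ring Λ] [Group G] [Fintype G]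
    [MulSemiringAction G Λ] [Ring S] (ι : Λ →+* S) (u : G → S) : Prop where
  u_one : u 1 = 1
  u_mul : ∀ σ τ : G, u σ * u τ = u (σ * τ)
  u_mul_ι : ∀ (σ : G) (b : Λ), u σ * ι b = ι (σ • b) * u σ
  existsUnique_sum : ∀ s : S, ∃! c : G → Λ, s = ∑ σ : G, ι (c σ) * u σ

namespace IsSkewGroupAlgebra

variable {Λ G S : Type*} [Ring Λ] [Group G] [Fintype G] [MulSemiringAction G Λ] [Ring S]
  {ι : Λ →+* S} {u : G → S}

variable (ι u) in
def sumHom : (G → Λ) →+ S where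
  toFun c := ∑ σ : G, ι (c σ) * u σ
  map_zero' := by simp
  map_add' a b := by simp only [Pi.add_apply, map_add, add_mul, sum_add_distrib]

variable (u) in
def average (p : S →+ S) : S →+ S :=
  ∑ σ : G, (AddMonoidHom.mulLeft (u σ⁻¹)).comp (p.comp (AddMonoidHom.mulLeft (u σ)))

theorem average_apply (p : S →+ S) (x : S) : average u p x = ∑ σ : G, u σ⁻¹ * p (u σ * x) := by
  simp [average]

theorem average_mem {N : Ideal S} {p : S →+ S} (hp : ∀ x, p x ∈ N) (x : S) :
    average u p x ∈ N := by
  rw [average_apply]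
  exact sum_mem fun σ _ => N.mul_mem_left (u σ⁻¹) (hp _)

variable (h : IsSkewGroupAlgebra ι u)
include h

theorem bijective_sumHom : Function.Bijective (sumHom ι u) :=
  Function.bijective_iff_existsUnique _ |>.mpr fun s =>
    (h.existsUnique_sum s).imp fun _ hc => ⟨hc.1.symm, fun c hc' => hc.2 c hc'.symm⟩

noncomputable def coeff : S ≃+ (G → Λ) :=
  (AddEquiv.ofBijective (sumHom ι u) h.bijective_sumHom).symm

theorem sum_coeff (s : S) : ∑ σ : G, ι (h.coeff s σ) * u σ = s :=
  (AddEquiv.ofBijective (sumHom ι u) h.bijective_sumHom).apply_symm_apply s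

theorem coeff_sum (c : G → Λ) : h.coeff (∑ σ : G, ι (c σ) * u σ) = c :=
  (AddEquiv.ofBijective (sumHom ι u) h.bijective_sumHom).symm_apply_apply c

theorem sum_eq_zero_iff (c : G → Λ) : ∑ σ : G, ι (c σ) * u σ = 0 ↔ c = 0 := by
  rw [← h.coeff_sum c, map_eq_zero_iff _ h.coeff.injective, h.coeff_sum]

theorem sum_pi_single [DecidableEq G] (a : Λ) :
    ∑ σ : G, ι ((Pi.single 1 a : G → Λ) σ) * u σ = ι a := by
  rw [sum_eq_single 1 (fun σ _ hσ => by simp [hσ]) (by simp), Pi.single_eq_same, h.u_one,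
    mul_one]

theorem coeff_ι [DecidableEq G] (a : Λ) : h.coeff (ι a) = Pi.single 1 a := by
  rw [← h.sum_pi_single, coeff_sum]

theorem sum_mul_sum (a b : G → Λ) :
    (∑ σ : G, ι (a σ) * u σ) * (∑ τ : G, ι (b τ) * u τ) =
      ∑ ρ : G, ι (∑ σ : G, a σ * σ • b (σ⁻¹ * ρ)) * u ρ := by
  have hterm : ∀ σ τ : G,
      ι (a σ) * u σ * (ι (b τ) * u τ) = ι (a σ * σ • b τ) * u (σ * τ) := fun σ τ => by
    rw [mul_assoc, ← mul_assoc (u σ), h.u_mul_ι, mul_assoc, h.u_mul, ← mul_assoc, ← map_mul]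
  simp_rw [Finset.sum_mul_sum, hterm, map_sum, sum_mul]
  conv_rhs => rw [sum_comm]
  refine sum_congr rfl fun σ _ => ?_
  exact Fintype.sum_equiv (Equiv.mulLeft σ) _ _ fun τ => by simp

theorem coeff_mul (x y : S) (ρ : G) :
    h.coeff (x * y) ρ = ∑ σ : G, h.coeff x σ * σ • h.coeff y (σ⁻¹ * ρ) := by
  conv_lhs => rw [← h.sum_coeff x, ← h.sum_coeff y, h.sum_mul_sum, h.coeff_sum]

theorem u_inv_mul (σ : G) : u σ⁻¹ * u σ = 1 := by
  rw [h.u_mul, inv_mul_cancel, h.u_one]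

theorem coeff_mul_mem_mul {I J : Ideal Λ} (hJ : ∀ (σ : G), ∀ a ∈ J, σ • a ∈ J) {x y : S}
    (hx : ∀ σ, h.coeff x σ ∈ I) (hy : ∀ σ, h.coeff y σ ∈ J) (ρ : G) :
    h.coeff (x * y) ρ ∈ I * J := by
  rw [h.coeff_mul]
  exact sum_mem fun σ _ => Ideal.mul_mem_mul (hx σ) (hJ σ _ (hy _))

theorem coeff_pow_mem_pow {J : Ideal Λ} (hJ : ∀ (σ : G), ∀ a ∈ J, σ • a ∈ J) {x : S}
    (hx : ∀ σ, h.coeff x σ ∈ J) (n : ℕ) (σ : G) : h.coeff (x ^ n) σ ∈ J ^ n := by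
  induction n generalizing σ with
  | zero => simp [Submodule.pow_zero, Ideal.one_eq_top]
  | succ n ih => rw [pow_succ, Submodule.pow_succ]; exact h.coeff_mul_mem_mul hJ ih hx σ

theorem isNilpotent_of_forall_coeff_mem {J : Ideal Λ} (hJ : ∀ (σ : G), ∀ a ∈ J, σ • a ∈ J)
    (hJnil : IsNilpotent J) {x : S} (hx : ∀ σ, h.coeff x σ ∈ J) : IsNilpotent x := by
  obtain ⟨n, hn⟩ := hJnil
  refine ⟨n, h.coeff.injective (funext fun σ => ?_)⟩
  simpa [hn] using h.coeff_pow_mem_pow hJ hx n σ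

theorem mem_jacobson_of_forall_coeff_mem [IsArtinianRing Λ] {s : S}
    (hs : ∀ σ, h.coeff s σ ∈ Ring.jacobson Λ) : s ∈ Ring.jacobson S := by
  refine mem_jacobson_of_forall_isNilpotent_mul fun y => ?_
  refine h.isNilpotent_of_forall_coeff_mem (fun σ _ => smul_mem_jacobson σ)
    (Ideal.jacobson_bot (R := Λ) ▸ IsArtinianRing.isNilpotent_jacobson_bot) fun ρ => ?_
  rw [h.coeff_mul]
  exact sum_mem fun σ _ => Ideal.mul_mem_left _ _ (smul_mem_jacobson σ (hs _))

theorem average_u_mul (p : S →+ S) (τ : G) (x : S) :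
    average u p (u τ * x) = u τ * average u p x := by
  rw [average_apply, average_apply, mul_sum]
  refine Fintype.sum_equiv (Equiv.mulRight τ) _ _ fun σ => ?_
  rw [Equiv.coe_mulRight, ← mul_assoc, h.u_mul, ← mul_assoc, h.u_mul, mul_inv_rev,
    mul_inv_cancel_left]

theorem average_ι_mul {p : S →+ S} (hp : ∀ a x, p (ι a * x) = ι a * p x) (a : Λ) (x : S) :
    average u p (ι a * x) = ι a * average u p x := by
  rw [average_apply, average_apply, mul_sum]
  refine sum_congr rfl fun σ _ => ?_
  rw [← mul_assoc, h.u_mul_ι, mul_assoc, hp, ← mul_assoc, h.u_mul_ι, inv_smul_smul, mul_assoc]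

theorem average_mul {p : S →+ S} (hp : ∀ a x, p (ι a * x) = ι a * p x) (t x : S) :
    average u p (t * x) = t * average u p x := by
  rw [← h.sum_coeff t, sum_mul, sum_mul, map_sum]
  refine sum_congr rfl fun σ _ => ?_
  rw [mul_assoc, h.average_ι_mul hp, h.average_u_mul, mul_assoc]

theorem average_eq_card_nsmul {N : Ideal S} {p : S →+ S} (hp : ∀ x ∈ N, p x = x) {x : S}
    (hx : x ∈ N) : average u p x = Fintype.card G • x := by
  rw [average_apply, ← card_univ, ← sum_const]
  refine sum_congr rfl fun σ _ => ?_
  rw [hp _ (N.mul_mem_left (u σ) hx), ← mul_assoc, h.u_inv_mul, one_mul]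

theorem isSemisimpleRing [IsSemisimpleRing Λ] (hG : IsUnit (Fintype.card G : S)) :
    IsSemisimpleRing S where
  exists_isCompl N := by
    obtain ⟨p, hpN, hpid, hpι⟩ := exists_projection_of_isSemisimpleRing ι N
    obtain ⟨v, hv⟩ := hG
    have hv_comm : ∀ y : S, ↑v⁻¹ * y = y * ↑v⁻¹ := fun y =>
      (Commute.units_inv_left (hv ▸ Nat.cast_commute _ y)).eq
    let P : S →ₗ[S] N :=
      { toFun x := ⟨↑v⁻¹ * average u p x, N.smul_mem _ (average_mem hpN x)⟩
        map_add' x y := Subtype.ext (by simp [mul_add])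
        map_smul' t x := Subtype.ext (by
          simp only [smul_eq_mul, h.average_mul hpι, RingHom.id_apply, SetLike.mk_smul_mk,
            ← mul_assoc, hv_comm]) }
    refine ⟨_, LinearMap.isCompl_of_proj (f := P) fun n => Subtype.ext ?_⟩
    change ↑v⁻¹ * average u p n = n
    rw [h.average_eq_card_nsmul hpid n.2, nsmul_eq_mul, ← hv, ← mul_assoc, v.inv_mul, one_mul]

section Map

variable {Λ' T : Type*} [Ring Λ'] [MulSemiringAction G Λ'] [Ring T] {ι' : Λ' →+* T}
  {u' : G → T} (h' : IsSkewGroupAlgebra ι' u') (f : Λ →+* Λ')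
  (hf : ∀ (σ : G) (x : Λ), f (σ • x) = σ • f x)

noncomputable def map : S →+* T where
  toFun s := ∑ σ : G, ι' (f (h.coeff s σ)) * u' σ
  map_one' := by
    classical
    rw [← map_one ι, h.coeff_ι, ← map_one ι', ← map_one f, ← h'.sum_pi_single]
    simp [Pi.single_apply, apply_ite]
  map_mul' x y := by
    simp only [h.coeff_mul, h'.sum_mul_sum, map_sum, map_mul, hf]
  map_zero' := by simp
  map_add' x y := by simp [add_mul, sum_add_distrib]

theorem map_apply (s : S) : h.map h' f hf s = ∑ σ : G, ι' (f (h.coeff s σ)) * u' σ := rfl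

theorem map_ι (a : Λ) : h.map h' f hf (ι a) = ι' (f a) := by
  classical
  rw [map_apply, h.coeff_ι, ← h'.sum_pi_single]
  simp [Pi.single_apply, apply_ite]

theorem map_eq_zero_iff (s : S) : h.map h' f hf s = 0 ↔ ∀ σ, f (h.coeff s σ) = 0 := by
  rw [map_apply, h'.sum_eq_zero_iff, funext_iff]
  rfl

theorem map_surjective (hfs : Function.Surjective f) : Function.Surjective (h.map h' f hf) := by
  intro t
  choose c hc using fun σ => hfs (h'.coeff t σ)
  exact ⟨∑ σ : G, ι (c σ) * u σ, by simp only [map_apply, h.coeff_sum, hc, h'.sum_coeff]⟩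

theorem mem_jacobson_iff_map_eq_zero [IsArtinianRing Λ] (hfs : Function.Surjective f)
    (hker : ∀ x, f x = 0 ↔ x ∈ Ring.jacobson Λ) (hG : IsUnit (Fintype.card G : T)) (s : S) :
    s ∈ Ring.jacobson S ↔ h.map h' f hf s = 0 := by
  have : IsSemisimpleRing Λ' :=
    isSemisimpleRing_of_surjective_of_jacobson_le_ker f hfs fun x hx => (hker x).2 hx
  have : IsSemisimpleRing T := h'.isSemisimpleRing hG
  have : RingHomSurjective (h.map h' f hf) := ⟨h.map_surjective h' f hf hfs⟩
  refine ⟨fun hs => IsSemisimpleModule.jacobson_le_ker S T S T (h.map h' f hf).toSemilinearMap hs,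
    fun hs => h.mem_jacobson_of_forall_coeff_mem fun σ => (hker _).1 ?_⟩
  exact (h.map_eq_zero_iff h' f hf s).1 hs σ

end Map

end IsSkewGroupAlgebra

theorem stmt15_general (k : Type) [Field k] (Λ : Type) [Ring Λ] [Algebra k Λ]
    [FiniteDimensional k Λ]
    (G : Type) [Group G] [Fintype G] [MulSemiringAction G Λ]
    (hcard : (Fintype.card G : k) ≠ 0)
    -- `S` is the skew group algebra `ΛG`
    (S : Type) [Ring S] [Algebra k S] (ι : Λ →ₐ[k] S) (u : G → S)
    (hu1 : u 1 = 1)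
    (humul : ∀ σ τ : G, u σ * u τ = u (σ * τ))
    (hcomm : ∀ (σ : G) (b : Λ), u σ * ι b = ι (σ • b) * u σ)
    (hbasis : ∀ s : S, ∃! c : G → Λ, s = ∑ σ : G, ι (c σ) * u σ)
    -- `Λq` is the semisimple quotient `Λ/r` with the induced `G`-action
    (Λq : Type) [Ring Λq] [Algebra k Λq] (π : Λ →ₐ[k] Λq)
    (hπsurj : Function.Surjective π)
    (hπker : ∀ x : Λ, π x = 0 ↔ x ∈ (⊥ : Ideal Λ).jacobson)
    [MulSemiringAction G Λq] (hπact : ∀ (σ : G) (x : Λ), π (σ • x) = σ • π x)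
    -- `T` is the skew group algebra `(Λ/r)G`
    (T : Type) [Ring T] [Algebra k T] (ιT : Λq →ₐ[k] T) (uT : G → T)
    (huT1 : uT 1 = 1)
    (huTmul : ∀ σ τ : G, uT σ * uT τ = uT (σ * τ))
    (hcommT : ∀ (σ : G) (b : Λq), uT σ * ιT b = ιT (σ • b) * uT σ)
    (hbasisT : ∀ t : T, ∃! c : G → Λq, t = ∑ σ : G, ιT (c σ) * uT σ) :
    -- `rad (ΛG) = r · ΛG`
    (∀ s : S, s ∈ (⊥ : Ideal S).jacobson ↔
      ∃ c : G → Λ, (∀ σ, c σ ∈ (⊥ : Ideal Λ).jacobson) ∧ s = ∑ σ : G, ι (c σ) * u σ) ∧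
    -- `(ΛG)/rad(ΛG) ≅ (Λ/r)G` as `k`-algebras
    (∃ K : TwoSidedIdeal S, (∀ s : S, s ∈ K ↔ s ∈ (⊥ : Ideal S).jacobson) ∧
      ∃ Ψ : K.ringCon.Quotient ≃+* T,
        ∀ c : k, Ψ (RingCon.mk' K.ringCon (algebraMap k S c)) = algebraMap k T c) := by
  simp only [Ideal.jacobson_bot] at hπker ⊢
  have hS : IsSkewGroupAlgebra (ι : Λ →+* S) u := ⟨hu1, humul, hcomm, hbasis⟩
  have hT : IsSkewGroupAlgebra (ιT : Λq →+* T) uT := ⟨huT1, huTmul, hcommT, hbasisT⟩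
  have hG : IsUnit (Fintype.card G : T) := by
    simpa using hcard.isUnit.map (algebraMap k T)
  have : IsArtinianRing Λ := isArtinian_of_tower k inferInstance
  set φ := hS.map hT (π : Λ →+* Λq) hπact
  have hrad : ∀ s, s ∈ Ring.jacobson S ↔ φ s = 0 :=
    hS.mem_jacobson_iff_map_eq_zero hT _ hπact hπsurj hπker hG
  refine ⟨fun s => ?_, TwoSidedIdeal.ker φ, fun s => by rw [TwoSidedIdeal.mem_ker, hrad],
    RingCon.quotientKerEquivOfSurjective φ (hS.map_surjective hT _ hπact hπsurj), fun c => ?_⟩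
  · rw [hrad]
    refine (hS.map_eq_zero_iff hT _ hπact s).trans ?_
    simp only [AlgHom.toRingHom_eq_coe, AlgHom.coe_toRingHom, hπker]
    refine ⟨fun hs => ⟨_, hs, (hS.sum_coeff s).symm⟩, ?_⟩
    rintro ⟨c, hc, rfl⟩
    rwa [show hS.coeff (∑ σ, ι (c σ) * u σ) = c from hS.coeff_sum c]
  · change φ (algebraMap k S c) = _
    rw [← ι.commutes]
    refine (hS.map_ι hT _ hπact _).trans ?_
    simp only [AlgHom.toRingHom_eq_coe, AlgHom.coe_toRingHom, AlgHom.commutes]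

/-- Let `Λ` be a finite-dimensional `k`-algebra, `G` a finite group acting on
`Λ` by `k`-algebra automorphisms with `|G|` invertible in `k`, and `ΛG` the skew group
algebra (a `k`-algebra `S` which is free as a left `Λ`-module with basis `{u_σ}` and
multiplication determined by `u_σ · b = (σ • b) · u_σ`).  If `r = rad Λ`, then
`rΛG = rad (ΛG)` and `(ΛG)/rad(ΛG) ≅ (Λ/r)G` as `k`-algebras, where `(Λ/r)G` is the skew
group algebra of the induced `G`-action on `Λ/r`. -/
theorem stmt15 (k : Type) [Field k] (Λ : Type) [Ring Λ] [Algebra k Λ]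
    [FiniteDimensional k Λ]
    (G : Type) [Group G] [Fintype G] [MulSemiringAction G Λ]
    (hkact : ∀ (σ : G) (c : k) (x : Λ), σ • (c • x) = c • (σ • x))
    (hcard : (Fintype.card G : k) ≠ 0)
    -- `S` is the skew group algebra `ΛG`
    (S : Type) [Ring S] [Algebra k S] (ι : Λ →ₐ[k] S) (u : G → S)
    (hu1 : u 1 = 1)
    (humul : ∀ σ τ : G, u σ * u τ = u (σ * τ))
    (hcomm : ∀ (σ : G) (b : Λ), u σ * ι b = ι (σ • b) * u σ)
    (hbasis : ∀ s : S, ∃! c : G → Λ, s = ∑ σ : G, ι (c σ) * u σ)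
    -- `Λq` is the semisimple quotient `Λ/r` with the induced `G`-action
    (Λq : Type) [Ring Λq] [Algebra k Λq] (π : Λ →ₐ[k] Λq)
    (hπsurj : Function.Surjective π)
    (hπker : ∀ x : Λ, π x = 0 ↔ x ∈ (⊥ : Ideal Λ).jacobson)
    [MulSemiringAction G Λq] (hπact : ∀ (σ : G) (x : Λ), π (σ • x) = σ • π x)
    -- `T` is the skew group algebra `(Λ/r)G`
    (T : Type) [Ring T] [Algebra k T] (ιT : Λq →ₐ[k] T) (uT : G → T)
    (huT1 : uT 1 = 1)
    (huTmul : ∀ σ τ : G, uT σ * uT τ = uT (σ * τ))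
    (hcommT : ∀ (σ : G) (b : Λq), uT σ * ιT b = ιT (σ • b) * uT σ)
    (hbasisT : ∀ t : T, ∃! c : G → Λq, t = ∑ σ : G, ιT (c σ) * uT σ) :
    -- `rad (ΛG) = r · ΛG`
    (∀ s : S, s ∈ (⊥ : Ideal S).jacobson ↔
      ∃ c : G → Λ, (∀ σ, c σ ∈ (⊥ : Ideal Λ).jacobson) ∧ s = ∑ σ : G, ι (c σ) * u σ) ∧
    -- `(ΛG)/rad(ΛG) ≅ (Λ/r)G` as `k`-algebras
    (∃ K : TwoSidedIdeal S, (∀ s : S, s ∈ K ↔ s ∈ (⊥ : Ideal S).jacobson) ∧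
      ∃ Ψ : K.ringCon.Quotient ≃+* T,
        ∀ c : k, Ψ (RingCon.mk' K.ringCon (algebraMap k S c)) = algebraMap k T c) :=
  stmt15_general k Λ G hcard S ι u hu1 humul hcomm hbasis Λq π hπsurj hπker hπact T ιT uT huT1
    huTmul hcommT hbasisT
end
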